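/- arXiv:1107.5933 — 3 statements merged into one kernel-verified Lean document; each statement's English description precedes it below -/
import Mathlib

section
/- Let θ ∈ L¹_loc(0,∞) and f ∈ L¹_loc(0,∞), and let k ≥ 0. Suppose that θ(t) + k∫₀ᵗ θ(τ)dτ ≤ ∫ₛᵗ f(τ)dτ + θ(s) + k∫₀ˢ θ(τ)dτ holds for a.e. t, s ∈ (0,∞) with t ≥ s. Then θ(t) ≤ θ(s)e^{-k(t-s)} + ∫ₛᵗ e^{-k(t-τ)} f(τ)dτ for a.e. t, s ∈ (0,∞) with t ≥ s. -/
open MeasureTheory intervalIntegral Real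

lemma exp_prim (k a b : ℝ) :
    ∫ τ in a..b, k * Real.exp (k * τ) = Real.exp (k * b) - Real.exp (k * a) := by
  have hderiv : ∀ τ ∈ Set.uIcc a b,
      HasDerivAt (fun x => Real.exp (k * x)) (k * Real.exp (k * τ)) τ := by
    intro τ _
    simpa [mul_comm] using ((hasDerivAt_id τ).const_mul k).exp
  exact intervalIntegral.integral_eq_sub_of_hasDerivAt hderiv
    ((continuous_const.mul (Real.continuous_exp.comp
      (continuous_const.mul continuous_id))).intervalIntegrable a b)

lemma key_fubini (k s t : ℝ) (hst : s ≤ t) {h : ℝ → ℝ}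
    (hh : IntegrableOn h (Set.Ioc s t)) :
    ∫ τ in s..t, (k * Real.exp (k * τ)) * (∫ u in s..τ, h u)
      = ∫ u in s..t, (Real.exp (k * t) - Real.exp (k * u)) * h u := by
  set μ := volume.restrict (Set.Ioc s t) with hμ
  haveI : IsFiniteMeasure μ := ⟨by
    rw [hμ, Measure.restrict_apply_univ, Real.volume_Ioc]
    exact ENNReal.ofReal_lt_top⟩
  set F : ℝ → ℝ → ℝ := fun τ u => if u ≤ τ then (k * Real.exp (k * τ)) * h u else 0 with hF
  have hFunc : Function.uncurry F = fun p : ℝ × ℝ =>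
      Set.indicator {q : ℝ × ℝ | q.2 ≤ q.1} (fun p => (k * Real.exp (k * p.1)) * h p.2) p := by
    ext p
    by_cases hp : p.2 ≤ p.1 <;> simp [Function.uncurry, hF, hp, Set.indicator]
  have hmeasset : MeasurableSet {q : ℝ × ℝ | q.2 ≤ q.1} :=
    measurableSet_le measurable_snd measurable_fst
  have hasm : AEStronglyMeasurable (Function.uncurry F) (μ.prod μ) := by
    rw [hFunc]
    exact (((continuous_const.mul (Real.continuous_exp.comp
        (continuous_const.mul continuous_fst))).aestronglyMeasurable).mul
      hh.aestronglyMeasurable.comp_snd).indicator hmeasset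
  set C : ℝ := |k| * (Real.exp (k * s) + Real.exp (k * t)) with hC
  have hCb : ∀ τ ∈ Set.Ioc s t, |k * Real.exp (k * τ)| ≤ C := by
    intro τ hτ
    rw [abs_mul, abs_of_pos (Real.exp_pos _), hC]
    apply mul_le_mul_of_nonneg_left _ (abs_nonneg k)
    rcases le_or_gt 0 k with hk | hk
    · calc Real.exp (k * τ) ≤ Real.exp (k * t) :=
            Real.exp_le_exp.2 (mul_le_mul_of_nonneg_left hτ.2 hk)
        _ ≤ _ := le_add_of_nonneg_left (Real.exp_pos _).le
    · calc Real.exp (k * τ) ≤ Real.exp (k * s) :=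
            Real.exp_le_exp.2 (by nlinarith [hτ.1])
        _ ≤ _ := le_add_of_nonneg_right (Real.exp_pos _).le
  have hfst : ∀ᵐ p : ℝ × ℝ ∂(μ.prod μ), p.1 ∈ Set.Ioc s t := by
    rw [ae_iff]
    have heq : {p : ℝ × ℝ | ¬ p.1 ∈ Set.Ioc s t} = (Set.Ioc s t)ᶜ ×ˢ (Set.univ : Set ℝ) := by
      ext p; simp [Set.mem_prod]
    rw [heq, Measure.prod_prod]
    have h0 : μ (Set.Ioc s t)ᶜ = 0 := by
      rw [hμ, Measure.restrict_apply measurableSet_Ioc.compl]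
      simp
    rw [h0, zero_mul]
  have hdom : Integrable (fun p : ℝ × ℝ => C * |h p.2|) (μ.prod μ) :=
    (integrable_const C).mul_prod hh.abs
  have hint : Integrable (Function.uncurry F) (μ.prod μ) := by
    refine hdom.mono' hasm ?_
    filter_upwards [hfst] with p hp
    have hCnn : (0:ℝ) ≤ C := by positivity
    by_cases hle : p.2 ≤ p.1
    · simp only [Function.uncurry, hF, hle, if_true, Real.norm_eq_abs]
      rw [abs_mul]
      exact mul_le_mul_of_nonneg_right (hCb _ hp) (abs_nonneg _)
    · simp only [Function.uncurry, hF, hle, if_false, norm_zero]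
      positivity
  have hswap := MeasureTheory.integral_integral_swap hint
  -- identify LHS
  have hLHS : ∫ τ in s..t, (k * Real.exp (k * τ)) * (∫ u in s..τ, h u)
      = ∫ τ, (∫ u, F τ u ∂μ) ∂μ := by
    rw [intervalIntegral.integral_of_le hst]
    apply setIntegral_congr_fun measurableSet_Ioc
    intro τ hτ
    show (k * Real.exp (k * τ)) * (∫ u in s..τ, h u) = ∫ u, F τ u ∂μ
    have h1 : (fun u => F τ u) = fun u =>
        (k * Real.exp (k * τ)) * (Set.Iic τ).indicator h u := by
      ext u
      by_cases hu : u ≤ τ <;> simp [hF, hu, Set.indicator]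
    rw [h1, MeasureTheory.integral_const_mul, hμ, setIntegral_indicator measurableSet_Iic,
      Set.Ioc_inter_Iic, min_eq_right hτ.2, intervalIntegral.integral_of_le hτ.1.le]
  -- identify RHS
  have hRHS : ∫ u in s..t, (Real.exp (k * t) - Real.exp (k * u)) * h u
      = ∫ u, (∫ τ, F τ u ∂μ) ∂μ := by
    rw [intervalIntegral.integral_of_le hst]
    apply setIntegral_congr_fun measurableSet_Ioc
    intro u hu
    show (Real.exp (k * t) - Real.exp (k * u)) * h u = ∫ τ, F τ u ∂μ
    have h1 : (fun τ => F τ u) = fun τ =>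
        ((Set.Ici u).indicator (fun τ => k * Real.exp (k * τ)) τ) * h u := by
      ext τ
      by_cases hτ : u ≤ τ <;> simp [hF, hτ, Set.indicator]
    rw [h1, MeasureTheory.integral_mul_const, hμ, setIntegral_indicator measurableSet_Ici]
    have h2 : Set.Ioc s t ∩ Set.Ici u = Set.Icc u t := by
      ext x
      simp only [Set.mem_inter_iff, Set.mem_Ioc, Set.mem_Ici, Set.mem_Icc]
      constructor
      · rintro ⟨⟨_, hx2⟩, hx3⟩; exact ⟨hx3, hx2⟩
      · rintro ⟨hx1, hx2⟩; exact ⟨⟨lt_of_lt_of_le hu.1 hx1, hx2⟩, hx1⟩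
    rw [h2, MeasureTheory.integral_Icc_eq_integral_Ioc,
      ← intervalIntegral.integral_of_le hu.2, exp_prim]
  rw [hLHS, hRHS]
  exact hswap

lemma main_est (θ f : ℝ → ℝ) (k s t : ℝ) (hk : 0 ≤ k) (hs : 0 < s) (hst : s ≤ t)
    (hθ : IntegrableOn θ (Set.Ioc 0 t)) (hf : IntegrableOn f (Set.Ioc 0 t))
    (hP : θ t + k * ∫ τ in (0:ℝ)..t, θ τ ≤
      (∫ τ in s..t, f τ) + θ s + k * ∫ τ in (0:ℝ)..s, θ τ)
    (hb : ∀ᵐ τ ∂(volume : Measure ℝ), 0 < τ → τ ≤ t →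
      θ t + k * ∫ τ' in (0:ℝ)..t, θ τ' ≤
        (∫ u in τ..t, f u) + θ τ + k * ∫ τ' in (0:ℝ)..τ, θ τ') :
    θ t ≤ θ s * Real.exp (-k * (t - s)) +
      ∫ τ in s..t, Real.exp (-k * (t - τ)) * f τ := by
  have h0t : (0:ℝ) < t := lt_of_lt_of_le hs hst
  have hθI : ∀ a b : ℝ, 0 ≤ a → a ≤ b → b ≤ t → IntervalIntegrable θ volume a b := by
    intro a b ha hab hbt
    rw [intervalIntegrable_iff_integrableOn_Ioc_of_le hab]
    exact hθ.mono_set (Set.Ioc_subset_Ioc ha hbt)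
  have hfI : ∀ a b : ℝ, 0 ≤ a → a ≤ b → b ≤ t → IntervalIntegrable f volume a b := by
    intro a b ha hab hbt
    rw [intervalIntegrable_iff_integrableOn_Ioc_of_le hab]
    exact hf.mono_set (Set.Ioc_subset_Ioc ha hbt)
  have hIθ0s : IntervalIntegrable θ volume 0 s := hθI 0 s le_rfl hs.le hst
  have hIθ0t : IntervalIntegrable θ volume 0 t := hθI 0 t le_rfl h0t.le le_rfl
  have hIθst : IntervalIntegrable θ volume s t := hθI s t hs.le hst le_rfl
  have hIfst : IntervalIntegrable f volume s t := hfI s t hs.le hst le_rfl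
  have hEc : Continuous (fun x : ℝ => Real.exp (k * x)) :=
    Real.continuous_exp.comp (continuous_const.mul continuous_id)
  have hΘc : ContinuousOn (fun x => ∫ τ in (0:ℝ)..x, θ τ) (Set.uIcc s t) := by
    have h1 : IntegrableOn θ (Set.uIcc 0 t) := by
      rw [Set.uIcc_of_le h0t.le, integrableOn_Icc_iff_integrableOn_Ioc]
      exact hθ
    exact (intervalIntegral.continuousOn_primitive_interval h1).mono
      (by rw [Set.uIcc_of_le hst, Set.uIcc_of_le h0t.le]
          exact Set.Icc_subset_Icc hs.le le_rfl)
  have hFc : ContinuousOn (fun x => ∫ u in s..x, f u) (Set.uIcc s t) := by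
    have h1 : IntegrableOn f (Set.uIcc s t) := by
      rw [Set.uIcc_of_le hst]
      exact hf.mono_set (fun x hx => ⟨lt_of_lt_of_le hs hx.1, hx.2⟩)
    exact intervalIntegral.continuousOn_primitive_interval h1
  have hIEθ : IntervalIntegrable (fun τ => Real.exp (k * τ) * θ τ) volume s t :=
    hIθst.continuousOn_mul hEc.continuousOn
  have hIEf : IntervalIntegrable (fun τ => Real.exp (k * τ) * f τ) volume s t :=
    hIfst.continuousOn_mul hEc.continuousOn
  have hIEΘ : IntervalIntegrable (fun τ => Real.exp (k * τ) * ∫ u in (0:ℝ)..τ, θ u) volume s t :=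
    (hEc.continuousOn.mul hΘc).intervalIntegrable
  have hIEF : IntervalIntegrable (fun τ => Real.exp (k * τ) * ∫ u in s..τ, f u) volume s t :=
    (hEc.continuousOn.mul hFc).intervalIntegrable
  have hIE : IntervalIntegrable (fun τ => Real.exp (k * τ)) volume s t :=
    hEc.intervalIntegrable s t
  -- basic exponential integral
  have hEsEq : k * ∫ τ in s..t, Real.exp (k * τ) = Real.exp (k * t) - Real.exp (k * s) := by
    rw [← intervalIntegral.integral_const_mul, exp_prim]
  -- splitting of ∫₀ θ
  have hb1eq : (∫ τ in (0:ℝ)..s, θ τ) + (∫ τ in s..t, θ τ) = ∫ τ in (0:ℝ)..t, θ τ :=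
    intervalIntegral.integral_add_adjacent_intervals hIθ0s hIθst
  -- key Fubini identity for θ
  have hθIoc : IntegrableOn θ (Set.Ioc s t) := hθ.mono_set (Set.Ioc_subset_Ioc hs.le le_rfl)
  have hfIoc : IntegrableOn f (Set.Ioc s t) := hf.mono_set (Set.Ioc_subset_Ioc hs.le le_rfl)
  have hE1 : k * (∫ τ in s..t, Real.exp (k * τ) * ∫ u in (0:ℝ)..τ, θ u)
      - (k * ∫ τ in (0:ℝ)..s, θ τ) * (∫ τ in s..t, Real.exp (k * τ))
      = Real.exp (k * t) * (∫ τ in s..t, θ τ) - ∫ τ in s..t, Real.exp (k * τ) * θ τ := by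
    have hkθ := key_fubini k s t hst hθIoc
    have hL : ∫ τ in s..t, (k * Real.exp (k * τ)) * (∫ u in s..τ, θ u)
        = k * (∫ τ in s..t, Real.exp (k * τ) * ∫ u in (0:ℝ)..τ, θ u)
          - (k * ∫ τ in (0:ℝ)..s, θ τ) * (∫ τ in s..t, Real.exp (k * τ)) := by
      have hcongr : Set.EqOn
          (fun τ => (k * Real.exp (k * τ)) * (∫ u in s..τ, θ u))
          (fun τ => k * (Real.exp (k * τ) * ∫ u in (0:ℝ)..τ, θ u)
            - (k * ∫ τ' in (0:ℝ)..s, θ τ') * Real.exp (k * τ)) (Set.uIcc s t) := by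
        intro τ hτ
        rw [Set.uIcc_of_le hst] at hτ
        have hadj : (∫ u in (0:ℝ)..s, θ u) + (∫ u in s..τ, θ u) = ∫ u in (0:ℝ)..τ, θ u :=
          intervalIntegral.integral_add_adjacent_intervals hIθ0s (hθI s τ hs.le hτ.1 hτ.2)
        show (k * Real.exp (k * τ)) * (∫ u in s..τ, θ u)
          = k * (Real.exp (k * τ) * ∫ u in (0:ℝ)..τ, θ u)
            - (k * ∫ τ' in (0:ℝ)..s, θ τ') * Real.exp (k * τ)
        linear_combination (k * Real.exp (k * τ)) * hadj
      rw [intervalIntegral.integral_congr hcongr,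
        intervalIntegral.integral_sub (hIEΘ.const_mul k) (hIE.const_mul _),
        intervalIntegral.integral_const_mul, intervalIntegral.integral_const_mul]
    have hR : ∫ u in s..t, (Real.exp (k * t) - Real.exp (k * u)) * θ u
        = Real.exp (k * t) * (∫ τ in s..t, θ τ) - ∫ τ in s..t, Real.exp (k * τ) * θ τ := by
      have hfun : (fun u => (Real.exp (k * t) - Real.exp (k * u)) * θ u)
          = fun u => Real.exp (k * t) * θ u - Real.exp (k * u) * θ u := by
        funext u; ring
      rw [hfun, intervalIntegral.integral_sub (hIθst.const_mul _) hIEθ,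
        intervalIntegral.integral_const_mul]
    rw [← hL, ← hR]
    exact hkθ
  -- key Fubini identity for f
  have hE2 : k * (∫ τ in s..t, Real.exp (k * τ) * ∫ u in s..τ, f u)
      = Real.exp (k * t) * (∫ τ in s..t, f τ) - ∫ τ in s..t, Real.exp (k * τ) * f τ := by
    have hkf := key_fubini k s t hst hfIoc
    have hL : ∫ τ in s..t, (k * Real.exp (k * τ)) * (∫ u in s..τ, f u)
        = k * ∫ τ in s..t, Real.exp (k * τ) * ∫ u in s..τ, f u := by
      rw [← intervalIntegral.integral_const_mul]
      apply intervalIntegral.integral_congr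
      intro τ _
      show (k * Real.exp (k * τ)) * (∫ u in s..τ, f u)
        = k * (Real.exp (k * τ) * ∫ u in s..τ, f u)
      ring
    have hR : ∫ u in s..t, (Real.exp (k * t) - Real.exp (k * u)) * f u
        = Real.exp (k * t) * (∫ τ in s..t, f τ) - ∫ τ in s..t, Real.exp (k * τ) * f τ := by
      have hfun : (fun u => (Real.exp (k * t) - Real.exp (k * u)) * f u)
          = fun u => Real.exp (k * t) * f u - Real.exp (k * u) * f u := by
        funext u; ring
      rw [hfun, intervalIntegral.integral_sub (hIfst.const_mul _) hIEf,
        intervalIntegral.integral_const_mul]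
    rw [← hL, ← hR]
    exact hkf
  -- monotone comparison
  have hfunL : (fun τ => (k * Real.exp (k * τ)) *
      ((θ t + k * ∫ τ' in (0:ℝ)..t, θ τ') - (θ τ + k * ∫ u in (0:ℝ)..τ, θ u)))
      = fun τ => (k * (θ t + k * ∫ τ' in (0:ℝ)..t, θ τ')) * Real.exp (k * τ)
        - (k * (Real.exp (k * τ) * θ τ)
          + (k * k) * (Real.exp (k * τ) * ∫ u in (0:ℝ)..τ, θ u)) := by
    funext τ; ring
  have hfunR : (fun τ => (k * Real.exp (k * τ)) *
      ((∫ u in s..t, f u) - ∫ u in s..τ, f u))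
      = fun τ => (k * (∫ u in s..t, f u)) * Real.exp (k * τ)
        - k * (Real.exp (k * τ) * ∫ u in s..τ, f u) := by
    funext τ; ring
  have hIL : IntervalIntegrable (fun τ => (k * Real.exp (k * τ)) *
      ((θ t + k * ∫ τ' in (0:ℝ)..t, θ τ') - (θ τ + k * ∫ u in (0:ℝ)..τ, θ u))) volume s t := by
    rw [hfunL]
    exact (hIE.const_mul _).sub ((hIEθ.const_mul k).add (hIEΘ.const_mul (k * k)))
  have hIR : IntervalIntegrable (fun τ => (k * Real.exp (k * τ)) *
      ((∫ u in s..t, f u) - ∫ u in s..τ, f u)) volume s t := by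
    rw [hfunR]
    exact (hIE.const_mul _).sub (hIEF.const_mul k)
  have hR3int : (∫ τ in s..t, (k * Real.exp (k * τ)) *
        ((θ t + k * ∫ τ' in (0:ℝ)..t, θ τ') - (θ τ + k * ∫ u in (0:ℝ)..τ, θ u)))
      ≤ ∫ τ in s..t, (k * Real.exp (k * τ)) *
        ((∫ u in s..t, f u) - ∫ u in s..τ, f u) := by
    apply intervalIntegral.integral_mono_ae_restrict hst hIL hIR
    filter_upwards [ae_restrict_mem measurableSet_Icc, ae_restrict_of_ae hb] with τ hτ hbτ
    have h0τ : 0 < τ := lt_of_lt_of_le hs hτ.1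
    have hiτ := hbτ h0τ hτ.2
    have hFτ : (∫ u in s..τ, f u) + (∫ u in τ..t, f u) = ∫ u in s..t, f u :=
      intervalIntegral.integral_add_adjacent_intervals
        (hfI s τ hs.le hτ.1 hτ.2) (hfI τ t h0τ.le hτ.2 le_rfl)
    have hnn : 0 ≤ k * Real.exp (k * τ) := mul_nonneg hk (Real.exp_pos _).le
    show (k * Real.exp (k * τ)) *
        ((θ t + k * ∫ τ' in (0:ℝ)..t, θ τ') - (θ τ + k * ∫ u in (0:ℝ)..τ, θ u))
      ≤ (k * Real.exp (k * τ)) * ((∫ u in s..t, f u) - ∫ u in s..τ, f u)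
    apply mul_le_mul_of_nonneg_left _ hnn
    linarith [hiτ, hFτ]
  -- split both sides of hR3int
  have hLsplit : (∫ τ in s..t, (k * Real.exp (k * τ)) *
        ((θ t + k * ∫ τ' in (0:ℝ)..t, θ τ') - (θ τ + k * ∫ u in (0:ℝ)..τ, θ u)))
      = (k * (θ t + k * ∫ τ' in (0:ℝ)..t, θ τ')) * (∫ τ in s..t, Real.exp (k * τ))
        - (k * (∫ τ in s..t, Real.exp (k * τ) * θ τ)
          + (k * k) * ∫ τ in s..t, Real.exp (k * τ) * ∫ u in (0:ℝ)..τ, θ u) := by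
    rw [hfunL, intervalIntegral.integral_sub (hIE.const_mul _)
        ((hIEθ.const_mul k).add (hIEΘ.const_mul (k * k))),
      intervalIntegral.integral_add (hIEθ.const_mul k) (hIEΘ.const_mul (k * k)),
      intervalIntegral.integral_const_mul, intervalIntegral.integral_const_mul,
      intervalIntegral.integral_const_mul]
  have hRsplit : (∫ τ in s..t, (k * Real.exp (k * τ)) *
        ((∫ u in s..t, f u) - ∫ u in s..τ, f u))
      = (k * (∫ u in s..t, f u)) * (∫ τ in s..t, Real.exp (k * τ))
        - k * ∫ τ in s..t, Real.exp (k * τ) * ∫ u in s..τ, f u := by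
    rw [hfunR, intervalIntegral.integral_sub (hIE.const_mul _) (hIEF.const_mul k),
      intervalIntegral.integral_const_mul, intervalIntegral.integral_const_mul]
  rw [hLsplit, hRsplit] at hR3int
  -- now pure (non)linear arithmetic with the integrals as atoms
  have p1 : (k * (θ t + k * ∫ τ' in (0:ℝ)..t, θ τ')) * (∫ τ in s..t, Real.exp (k * τ))
      = (θ t + k * ∫ τ' in (0:ℝ)..t, θ τ') * (Real.exp (k * t) - Real.exp (k * s)) := by
    linear_combination (θ t + k * ∫ τ' in (0:ℝ)..t, θ τ') * hEsEq
  have p2 : (k * (∫ u in s..t, f u)) * (∫ τ in s..t, Real.exp (k * τ))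
      = (∫ u in s..t, f u) * (Real.exp (k * t) - Real.exp (k * s)) := by
    linear_combination (∫ u in s..t, f u) * hEsEq
  have p3 : (k * k) * (∫ τ in s..t, Real.exp (k * τ) * ∫ u in (0:ℝ)..τ, θ u)
      = k * (∫ τ in (0:ℝ)..s, θ τ) * (Real.exp (k * t) - Real.exp (k * s))
        + k * (Real.exp (k * t) * (∫ τ in s..t, θ τ)
          - ∫ τ in s..t, Real.exp (k * τ) * θ τ) := by
    linear_combination k * hE1 + (k * ∫ τ in (0:ℝ)..s, θ τ) * hEsEq
  have p5 : k * (Real.exp (k * t) * (∫ τ in s..t, θ τ))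
      = k * Real.exp (k * t) * (∫ τ in (0:ℝ)..t, θ τ)
        - k * Real.exp (k * t) * (∫ τ in (0:ℝ)..s, θ τ) := by
    linear_combination (k * Real.exp (k * t)) * hb1eq
  have hEsθ : Real.exp (k * s) * (θ t + (k * ∫ τ' in (0:ℝ)..t, θ τ')
        - k * (∫ τ in (0:ℝ)..s, θ τ) - ∫ u in s..t, f u)
      ≤ Real.exp (k * s) * θ s := by
    apply mul_le_mul_of_nonneg_left _ (Real.exp_pos _).le
    linarith [hP]
  have hG : Real.exp (k * t) * θ t
      ≤ Real.exp (k * s) * θ s + ∫ τ in s..t, Real.exp (k * τ) * f τ := by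
    linarith [hR3int, p1, p2, p3, p5, hE2, hEsθ]
  -- convert back
  have hint4 : ∫ τ in s..t, Real.exp (-k * (t - τ)) * f τ
      = Real.exp (-(k * t)) * ∫ τ in s..t, Real.exp (k * τ) * f τ := by
    rw [← intervalIntegral.integral_const_mul]
    apply intervalIntegral.integral_congr
    intro τ _
    show Real.exp (-k * (t - τ)) * f τ = Real.exp (-(k * t)) * (Real.exp (k * τ) * f τ)
    rw [show -k * (t - τ) = -(k * t) + k * τ by ring, Real.exp_add, mul_assoc]
  have hθs' : θ s * Real.exp (-k * (t - s))
      = Real.exp (-(k * t)) * (Real.exp (k * s) * θ s) := by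
    rw [show -k * (t - s) = -(k * t) + k * s by ring, Real.exp_add]
    ring
  have hθt' : θ t = Real.exp (-(k * t)) * (Real.exp (k * t) * θ t) := by
    rw [← mul_assoc, ← Real.exp_add, show -(k * t) + k * t = 0 by ring, Real.exp_zero, one_mul]
  calc θ t = Real.exp (-(k * t)) * (Real.exp (k * t) * θ t) := hθt'
    _ ≤ Real.exp (-(k * t)) * (Real.exp (k * s) * θ s
        + ∫ τ in s..t, Real.exp (k * τ) * f τ) :=
      mul_le_mul_of_nonneg_left hG (Real.exp_pos _).le
    _ = θ s * Real.exp (-k * (t - s)) + ∫ τ in s..t, Real.exp (-k * (t - τ)) * f τ := by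
      rw [hint4, hθs']; ring

/-- Gronwall-type lemma (Lemma 5.1, first part): if `θ` satisfies the integral
inequality `θ(t) + k∫₀ᵗθ ≤ ∫ₛᵗ f + θ(s) + k∫₀ˢθ` for a.e. `t ≥ s > 0`, then
`θ(t) ≤ θ(s)e^{-k(t-s)} + ∫ₛᵗ e^{-k(t-τ)} f(τ) dτ` for a.e. `t ≥ s > 0`. -/
theorem stmt0_gronwall_integral
    (θ f : ℝ → ℝ) (k : ℝ) (hk : 0 ≤ k)
    (hθ : ∀ T > 0, IntegrableOn θ (Set.Ioc 0 T))
    (hf : ∀ T > 0, IntegrableOn f (Set.Ioc 0 T))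
    (hineq : ∀ᵐ s ∂(volume : Measure ℝ), ∀ᵐ t ∂(volume : Measure ℝ),
      0 < s → s ≤ t →
        θ t + k * ∫ τ in (0:ℝ)..t, θ τ ≤
          (∫ τ in s..t, f τ) + θ s + k * ∫ τ in (0:ℝ)..s, θ τ) :
    ∀ᵐ s ∂(volume : Measure ℝ), ∀ᵐ t ∂(volume : Measure ℝ),
      0 < s → s ≤ t →
        θ t ≤ θ s * Real.exp (-k * (t - s)) +
          ∫ τ in s..t, Real.exp (-k * (t - τ)) * f τ := by
  -- cover of (0, ∞) by bounded intervals
  have hcover : Set.Ioi (0:ℝ) = ⋃ n : ℕ, Set.Ioc 0 ((n:ℝ) + 1) := by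
    ext x
    simp only [Set.mem_Ioi, Set.mem_iUnion, Set.mem_Ioc]
    constructor
    · intro hx
      obtain ⟨n, hn⟩ := exists_nat_ge x
      exact ⟨n, hx, by linarith⟩
    · rintro ⟨n, hn, -⟩
      exact hn
  -- measurable representatives
  have hθm : AEStronglyMeasurable θ (volume.restrict (Set.Ioi (0:ℝ))) := by
    rw [hcover, aestronglyMeasurable_iUnion_iff]
    intro n
    exact (hθ ((n:ℝ) + 1) (by positivity)).aestronglyMeasurable
  have hfm : AEStronglyMeasurable f (volume.restrict (Set.Ioi (0:ℝ))) := by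
    rw [hcover, aestronglyMeasurable_iUnion_iff]
    intro n
    exact (hf ((n:ℝ) + 1) (by positivity)).aestronglyMeasurable
  set θ₁ : ℝ → ℝ := (Set.Ioi (0:ℝ)).indicator (hθm.mk θ) with hθ₁def
  set f₁ : ℝ → ℝ := (Set.Ioi (0:ℝ)).indicator (hfm.mk f) with hf₁def
  have hθ₁meas : Measurable θ₁ := by
    rw [hθ₁def]
    exact (hθm.stronglyMeasurable_mk.indicator measurableSet_Ioi).measurable
  have hf₁meas : Measurable f₁ := by
    rw [hf₁def]
    exact (hfm.stronglyMeasurable_mk.indicator measurableSet_Ioi).measurable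
  have hθeq : ∀ᵐ x ∂(volume : Measure ℝ), x ∈ Set.Ioi (0:ℝ) → θ x = θ₁ x := by
    rw [← ae_restrict_iff' measurableSet_Ioi]
    filter_upwards [hθm.ae_eq_mk, ae_restrict_mem measurableSet_Ioi] with x hx hmem
    rw [hx, hθ₁def, Set.indicator_of_mem hmem]
  have hfeq : ∀ᵐ x ∂(volume : Measure ℝ), x ∈ Set.Ioi (0:ℝ) → f x = f₁ x := by
    rw [← ae_restrict_iff' measurableSet_Ioi]
    filter_upwards [hfm.ae_eq_mk, ae_restrict_mem measurableSet_Ioi] with x hx hmem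
    rw [hx, hf₁def, Set.indicator_of_mem hmem]
  -- transfer of integrability
  have hθ₁int : ∀ T > (0:ℝ), IntegrableOn θ₁ (Set.Ioc 0 T) := by
    intro T hT
    apply (hθ T hT).congr
    filter_upwards [ae_restrict_of_ae hθeq, ae_restrict_mem measurableSet_Ioc] with x hx hmem
    exact hx hmem.1
  have hf₁int : ∀ T > (0:ℝ), IntegrableOn f₁ (Set.Ioc 0 T) := by
    intro T hT
    apply (hf T hT).congr
    filter_upwards [ae_restrict_of_ae hfeq, ae_restrict_mem measurableSet_Ioc] with x hx hmem
    exact hx hmem.1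
  -- global interval integrability of the representatives
  have hθ₁II : ∀ a b : ℝ, IntervalIntegrable θ₁ volume a b := by
    intro a b
    rw [hθ₁def, intervalIntegrable_iff, IntegrableOn,
      integrable_indicator_iff measurableSet_Ioi, IntegrableOn,
      Measure.restrict_restrict measurableSet_Ioi]
    have hint := hθ₁int (max |a| |b| + 1) (by positivity)
    rw [hθ₁def, IntegrableOn, integrable_indicator_iff measurableSet_Ioi, IntegrableOn,
      Measure.restrict_restrict measurableSet_Ioi] at hint
    apply hint.mono_measure
    apply Measure.restrict_mono _ le_rfl
    rintro x ⟨h1, h2⟩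
    have h3 : max a b ≤ max |a| |b| := max_le_max (le_abs_self a) (le_abs_self b)
    exact ⟨h1, h1, by have := h2.2; linarith⟩
  have hf₁II : ∀ a b : ℝ, IntervalIntegrable f₁ volume a b := by
    intro a b
    rw [hf₁def, intervalIntegrable_iff, IntegrableOn,
      integrable_indicator_iff measurableSet_Ioi, IntegrableOn,
      Measure.restrict_restrict measurableSet_Ioi]
    have hint := hf₁int (max |a| |b| + 1) (by positivity)
    rw [hf₁def, IntegrableOn, integrable_indicator_iff measurableSet_Ioi, IntegrableOn,
      Measure.restrict_restrict measurableSet_Ioi] at hint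
    apply hint.mono_measure
    apply Measure.restrict_mono _ le_rfl
    rintro x ⟨h1, h2⟩
    have h3 : max a b ≤ max |a| |b| := max_le_max (le_abs_self a) (le_abs_self b)
    exact ⟨h1, h1, by have := h2.2; linarith⟩
  -- continuity of primitives
  have hHθc : Continuous (fun x => ∫ τ in (0:ℝ)..x, θ₁ τ) :=
    intervalIntegral.continuous_primitive hθ₁II 0
  have hHfc : Continuous (fun x => ∫ τ in (0:ℝ)..x, f₁ τ) :=
    intervalIntegral.continuous_primitive hf₁II 0
  -- congruence of integrals over positive intervals
  have hIeq : ∀ (g g₁ : ℝ → ℝ), (∀ᵐ x ∂(volume : Measure ℝ), x ∈ Set.Ioi (0:ℝ) → g x = g₁ x) →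
      ∀ a b : ℝ, 0 ≤ a → a ≤ b → (∫ τ in a..b, g τ) = ∫ τ in a..b, g₁ τ := by
    intro g g₁ hg a b ha hab
    apply intervalIntegral.integral_congr_ae
    filter_upwards [hg] with x hx hmem
    rw [Set.uIoc_of_le hab] at hmem
    exact hx (lt_of_le_of_lt ha hmem.1)
  -- hypothesis for the representatives, in a measurable form
  have hineq₁ : ∀ᵐ a ∂(volume : Measure ℝ), ∀ᵐ b ∂(volume : Measure ℝ), 0 < a → a ≤ b →
      θ₁ b + k * ∫ τ in (0:ℝ)..b, θ₁ τ ≤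
        ((∫ τ in (0:ℝ)..b, f₁ τ) - ∫ τ in (0:ℝ)..a, f₁ τ) + θ₁ a
          + k * ∫ τ in (0:ℝ)..a, θ₁ τ := by
    filter_upwards [hineq, hθeq] with a hae hθa
    filter_upwards [hae, hθeq] with b hP hθb
    intro h0a hab
    have h0b : (0:ℝ) < b := lt_of_lt_of_le h0a hab
    have h := hP h0a hab
    have e1 : θ a = θ₁ a := hθa h0a
    have e2 : θ b = θ₁ b := hθb h0b
    have e3 : (∫ τ in (0:ℝ)..a, θ τ) = ∫ τ in (0:ℝ)..a, θ₁ τ := hIeq θ θ₁ hθeq 0 a le_rfl h0a.le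
    have e4 : (∫ τ in (0:ℝ)..b, θ τ) = ∫ τ in (0:ℝ)..b, θ₁ τ := hIeq θ θ₁ hθeq 0 b le_rfl h0b.le
    have e5 : (∫ τ in a..b, f τ) = ∫ τ in a..b, f₁ τ := hIeq f f₁ hfeq a b h0a.le hab
    have e6 : (∫ τ in a..b, f₁ τ) = (∫ τ in (0:ℝ)..b, f₁ τ) - ∫ τ in (0:ℝ)..a, f₁ τ :=
      (intervalIntegral.integral_interval_sub_left (hf₁II 0 b) (hf₁II 0 a)).symm
    rw [e1, e2, e3, e4, e5, e6] at h
    exact h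
  -- measurability of the predicate, and swap of the a.e. quantifiers
  have hg1 : Measurable (fun x : ℝ × ℝ => θ₁ x.2 + k * ∫ τ in (0:ℝ)..x.2, θ₁ τ) :=
    (hθ₁meas.comp measurable_snd).add ((hHθc.measurable.comp measurable_snd).const_mul k)
  have hg2 : Measurable (fun x : ℝ × ℝ =>
      ((∫ τ in (0:ℝ)..x.2, f₁ τ) - ∫ τ in (0:ℝ)..x.1, f₁ τ) + θ₁ x.1
        + k * ∫ τ in (0:ℝ)..x.1, θ₁ τ) :=
    (((hHfc.measurable.comp measurable_snd).sub (hHfc.measurable.comp measurable_fst)).add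
      (hθ₁meas.comp measurable_fst)).add ((hHθc.measurable.comp measurable_fst).const_mul k)
  have hmeasset : MeasurableSet {x : ℝ × ℝ | 0 < x.1 → x.1 ≤ x.2 →
      θ₁ x.2 + k * ∫ τ in (0:ℝ)..x.2, θ₁ τ ≤
        ((∫ τ in (0:ℝ)..x.2, f₁ τ) - ∫ τ in (0:ℝ)..x.1, f₁ τ) + θ₁ x.1
          + k * ∫ τ in (0:ℝ)..x.1, θ₁ τ} := by
    have heq : {x : ℝ × ℝ | 0 < x.1 → x.1 ≤ x.2 →
        θ₁ x.2 + k * ∫ τ in (0:ℝ)..x.2, θ₁ τ ≤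
          ((∫ τ in (0:ℝ)..x.2, f₁ τ) - ∫ τ in (0:ℝ)..x.1, f₁ τ) + θ₁ x.1
            + k * ∫ τ in (0:ℝ)..x.1, θ₁ τ}
        = (({x : ℝ × ℝ | 0 < x.1} ∩ {x : ℝ × ℝ | x.1 ≤ x.2}) ∩
            {x : ℝ × ℝ | θ₁ x.2 + k * ∫ τ in (0:ℝ)..x.2, θ₁ τ ≤
              ((∫ τ in (0:ℝ)..x.2, f₁ τ) - ∫ τ in (0:ℝ)..x.1, f₁ τ) + θ₁ x.1
                + k * ∫ τ in (0:ℝ)..x.1, θ₁ τ}ᶜ)ᶜ := by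
      ext x
      simp only [Set.mem_setOf_eq, Set.mem_compl_iff, Set.mem_inter_iff]
      tauto
    rw [heq]
    exact (((measurableSet_lt measurable_const measurable_fst).inter
      (measurableSet_le measurable_fst measurable_snd)).inter
      (measurableSet_le hg1 hg2).compl).compl
  have hswap := (MeasureTheory.Measure.ae_ae_comm (μ := (volume : Measure ℝ))
    (ν := (volume : Measure ℝ))
    (p := fun a b : ℝ => 0 < a → a ≤ b →
      θ₁ b + k * ∫ τ in (0:ℝ)..b, θ₁ τ ≤
        ((∫ τ in (0:ℝ)..b, f₁ τ) - ∫ τ in (0:ℝ)..a, f₁ τ) + θ₁ a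
          + k * ∫ τ in (0:ℝ)..a, θ₁ τ) hmeasset).mp hineq₁
  -- conclusion
  filter_upwards [hineq₁, hθeq] with s hsae hθs
  filter_upwards [hsae, hswap, hθeq] with t hQst hSwt hθt
  intro h0s hst
  have h0t : (0:ℝ) < t := lt_of_lt_of_le h0s hst
  have hP₁ : θ₁ t + k * ∫ τ in (0:ℝ)..t, θ₁ τ ≤
      (∫ τ in s..t, f₁ τ) + θ₁ s + k * ∫ τ in (0:ℝ)..s, θ₁ τ := by
    have e6 : (∫ τ in s..t, f₁ τ) = (∫ τ in (0:ℝ)..t, f₁ τ) - ∫ τ in (0:ℝ)..s, f₁ τ :=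
      (intervalIntegral.integral_interval_sub_left (hf₁II 0 t) (hf₁II 0 s)).symm
    rw [e6]
    exact hQst h0s hst
  have hb₁ : ∀ᵐ τ ∂(volume : Measure ℝ), 0 < τ → τ ≤ t →
      θ₁ t + k * ∫ τ' in (0:ℝ)..t, θ₁ τ' ≤
        (∫ u in τ..t, f₁ u) + θ₁ τ + k * ∫ τ' in (0:ℝ)..τ, θ₁ τ' := by
    filter_upwards [hSwt] with τ hQ h0τ hτt
    have e : (∫ u in τ..t, f₁ u) = (∫ u in (0:ℝ)..t, f₁ u) - ∫ u in (0:ℝ)..τ, f₁ u :=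
      (intervalIntegral.integral_interval_sub_left (hf₁II 0 t) (hf₁II 0 τ)).symm
    rw [e]
    exact hQ h0τ hτt
  have hconc := main_est θ₁ f₁ k s t hk h0s hst (hθ₁int t h0t) (hf₁int t h0t) hP₁ hb₁
  have hIeq2 : (∫ τ in s..t, Real.exp (-k * (t - τ)) * f τ)
      = ∫ τ in s..t, Real.exp (-k * (t - τ)) * f₁ τ := by
    apply intervalIntegral.integral_congr_ae
    filter_upwards [hfeq] with x hx hmem
    rw [Set.uIoc_of_le hst] at hmem
    rw [hx (lt_trans h0s hmem.1)]
  rw [hθt h0t, hθs h0s, hIeq2]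
  exact hconc
end

section
/- Let F ∈ C¹(ℝ) be bounded from below, and suppose there exist c₃ > 0, c₄ ≥ 0 and p ∈ (1,2] such that |F'(s)|^p ≤ c₃|F(s)| + c₄ for all s ∈ ℝ. Then F has polynomial growth of order p' = p/(p-1): there exist c₅ > 0 and c₆ ≥ 0 such that |F(s)| ≤ c₅|s|^{p'} + c₆ for all s ∈ ℝ. -/
open Real

/-- Remark 2.1: if `F ∈ C¹(ℝ)` is bounded below and
`|F'(s)|^p ≤ c₃|F(s)| + c₄` with `p ∈ (1,2]`, then `F` has polynomial growth
of order `p' = p/(p-1)`: `|F(s)| ≤ c₅|s|^{p'} + c₆` for all `s`. -/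
theorem stmt7_polynomial_growth
    (F : ℝ → ℝ) (hF : ContDiff ℝ 1 F) (hbdd : BddBelow (Set.range F))
    (c₃ c₄ p : ℝ) (hc₃ : 0 < c₃) (hc₄ : 0 ≤ c₄) (hp1 : 1 < p) (hp2 : p ≤ 2)
    (hctrl : ∀ s : ℝ, |deriv F s| ^ p ≤ c₃ * |F s| + c₄) :
    ∃ c₅ > (0:ℝ), ∃ c₆ ≥ (0:ℝ), ∀ s : ℝ,
      |F s| ≤ c₅ * |s| ^ (p / (p - 1)) + c₆ := by
  obtain ⟨m, hm⟩ := hbdd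
  have hmle : ∀ s, m ≤ F s := fun s => hm (Set.mem_range_self s)
  have hp0 : (0:ℝ) < p := by linarith
  have hp1' : (0:ℝ) < p - 1 := by linarith
  set q : ℝ := p / (p - 1) with hq
  have hq1 : 1 < q := by
    rw [hq, lt_div_iff₀ hp1']; linarith
  set r : ℝ := (p - 1) / p with hr
  have hr0 : 0 < r := div_pos hp1' hp0
  have hrq : r * q = 1 := by
    rw [hr, hq, div_mul_div_comm, mul_comm (p - 1) p, div_self (mul_pos hp0 hp1').ne']
  obtain ⟨G, hGdef⟩ : ∃ G : ℝ → ℝ, ∀ t, G t = F t - m + |m| + c₄ / c₃ + 1 :=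
    ⟨_, fun _ => rfl⟩
  have hG1 : ∀ s, 1 ≤ G s := by
    intro s
    have := hmle s
    have h1 : 0 ≤ c₄ / c₃ := div_nonneg hc₄ hc₃.le
    have h3 : (0:ℝ) ≤ |m| := abs_nonneg m
    rw [hGdef s]; linarith
  have hG0 : ∀ s, 0 < G s := fun s => lt_of_lt_of_le one_pos (hG1 s)
  have hFleG : ∀ s, |F s| ≤ G s - c₄ / c₃ - 1 := by
    intro s
    have := hmle s
    rw [hGdef s]
    rcases abs_cases (F s) with ⟨h, _⟩ | ⟨h, _⟩ <;> rcases abs_cases m with ⟨h2, _⟩ | ⟨h2, _⟩ <;>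
      linarith
  -- differentiability
  have hFd : Differentiable ℝ F := hF.differentiable one_ne_zero
  have hGd : ∀ s, HasDerivAt G (deriv F s) s := by
    intro s
    rw [funext hGdef]
    simpa using ((((hFd s).hasDerivAt.sub_const m).add_const |m|).add_const (c₄ / c₃)).add_const 1
  set C : ℝ := r * c₃ ^ (1 / p) with hC
  have hC0 : 0 < C := mul_pos hr0 (rpow_pos_of_pos hc₃ _)
  set u : ℝ → ℝ := fun s => G s ^ r with hu
  have hud : ∀ s, HasDerivAt u (deriv F s * r * G s ^ (r - 1)) s := by
    intro s
    exact (hGd s).rpow_const (Or.inl (hG0 s).ne')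
  have hubound : ∀ s, |deriv F s * r * G s ^ (r - 1)| ≤ C := by
    intro s
    have hG' : |deriv F s| ≤ (c₃ * G s) ^ (1 / p) := by
      have h1 : |deriv F s| ^ p ≤ c₃ * G s := by
        have hcc : c₃ * (c₄ / c₃) = c₄ := by field_simp
        have h3 : c₃ * |F s| ≤ c₃ * G s - c₄ - c₃ := by nlinarith [hFleG s, hc₃]
        linarith [hctrl s]
      calc |deriv F s| = (|deriv F s| ^ p) ^ (1 / p) := by
            rw [← rpow_mul (abs_nonneg _), mul_one_div, div_self hp0.ne', rpow_one]
          _ ≤ (c₃ * G s) ^ (1 / p) :=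
            rpow_le_rpow (rpow_nonneg (abs_nonneg _) _) h1 (by positivity)
    have hGr : (0:ℝ) < G s ^ (r - 1) := rpow_pos_of_pos (hG0 s) _
    calc |deriv F s * r * G s ^ (r - 1)|
        = |deriv F s| * r * G s ^ (r - 1) := by
          rw [abs_mul, abs_mul, abs_of_nonneg hr0.le, abs_of_nonneg hGr.le]
      _ ≤ (c₃ * G s) ^ (1 / p) * r * G s ^ (r - 1) := by
          apply mul_le_mul_of_nonneg_right (mul_le_mul_of_nonneg_right hG' hr0.le) hGr.le
      _ = r * (c₃ ^ (1 / p) * (G s ^ (1 / p) * G s ^ (r - 1))) := by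
          rw [mul_rpow hc₃.le (hG0 s).le]; ring
      _ = C := by
          rw [← rpow_add (hG0 s)]
          have : 1 / p + (r - 1) = 0 := by rw [hr, div_sub_one hp0.ne', ← add_div]; ring
          rw [this, rpow_zero, mul_one, hC]
  -- Lipschitz bound via MVT
  have hlip : ∀ s : ℝ, u s ≤ u 0 + C * |s| := by
    intro s
    have key := Convex.norm_image_sub_le_of_norm_hasDerivWithin_le
      (f := u) (f' := fun s => deriv F s * r * G s ^ (r - 1)) (C := C)
      (fun x _ => (hud x).hasDerivWithinAt)
      (fun x _ => by rw [Real.norm_eq_abs]; exact hubound x) (convex_univ) (Set.mem_univ (0:ℝ))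
      (Set.mem_univ s)
    simp only [Real.norm_eq_abs, sub_zero] at key
    have h2 : u s - u 0 ≤ C * |s| := le_trans (le_abs_self _) key
    linarith
  have hu0 : 0 ≤ u 0 := (rpow_pos_of_pos (hG0 0) _).le
  refine ⟨2 ^ q * C ^ q,
    mul_pos (rpow_pos_of_pos two_pos q) (rpow_pos_of_pos hC0 q),
    2 ^ q * u 0 ^ q,
    mul_nonneg (rpow_nonneg (by norm_num) q) (rpow_nonneg hu0 q), fun s => ?_⟩
  have hGeq : G s = u s ^ q := by
    rw [hu, ← rpow_mul (hG0 s).le, hrq, rpow_one]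
  have hus : 0 ≤ u s := (rpow_pos_of_pos (hG0 s) _).le
  have hCs : 0 ≤ C * |s| := mul_nonneg hC0.le (abs_nonneg s)
  have step1 : u s ^ q ≤ (u 0 + C * |s|) ^ q :=
    rpow_le_rpow hus (hlip s) (by linarith)
  have step2 : (u 0 + C * |s|) ^ q ≤ 2 ^ q * (u 0 ^ q + (C * |s|) ^ q) := by
    have hmax : u 0 + C * |s| ≤ 2 * max (u 0) (C * |s|) := by
      rcases le_total (u 0) (C * |s|) with h | h
      · rw [max_eq_right h]; linarith
      · rw [max_eq_left h]; linarith
    have h2 : (u 0 + C * |s|) ^ q ≤ (2 * max (u 0) (C * |s|)) ^ q :=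
      rpow_le_rpow (by positivity) hmax (by linarith)
    have h3 : (2 * max (u 0) (C * |s|)) ^ q = 2 ^ q * max (u 0) (C * |s|) ^ q := by
      rw [mul_rpow (by norm_num) (le_max_of_le_left hu0)]
    have h4 : max (u 0) (C * |s|) ^ q ≤ u 0 ^ q + (C * |s|) ^ q := by
      rcases max_cases (u 0) (C * |s|) with ⟨he, _⟩ | ⟨he, _⟩ <;> rw [he]
      · nlinarith [rpow_nonneg hCs q]
      · nlinarith [rpow_nonneg hu0 q]
    calc (u 0 + C * |s|) ^ q ≤ 2 ^ q * max (u 0) (C * |s|) ^ q := by rw [← h3]; exact h2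
      _ ≤ 2 ^ q * (u 0 ^ q + (C * |s|) ^ q) := by
          apply mul_le_mul_of_nonneg_left h4 (by positivity)
  have hfinal : |F s| ≤ G s := by
    have h5 := hFleG s
    have h1 : (0:ℝ) ≤ c₄ / c₃ := div_nonneg hc₄ hc₃.le
    linarith
  calc |F s| ≤ G s := hfinal
    _ = u s ^ q := hGeq
    _ ≤ 2 ^ q * (u 0 ^ q + (C * |s|) ^ q) := le_trans step1 step2
    _ = 2 ^ q * C ^ q * |s| ^ q + 2 ^ q * u 0 ^ q := by
        rw [mul_rpow hC0.le (abs_nonneg s)]; ring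
end

section
/- Let G be a generalized semiflow on a metric space X that is asymptotically compact. Then G is eventually bounded: for every bounded set B ⊆ X there exists τ ≥ 0 such that γ^τ(B) = ⋃_{t≥τ} T(t)B is bounded. -/
open Filter Bornology
open scoped Topology NNReal

/-- A generalized semiflow on a metric space `X` in the sense of J.M. Ball:
a family of maps `z : [0,∞) → X` satisfying existence (H1), translation
invariance (H2), concatenation (H3) and upper semicontinuity with respect to
initial data (H4). -/
structure GeneralizedSemiflow (X : Type*) [MetricSpace X] where
  sols : Set (ℝ≥0 → X)
  /-- (H1) Existence: for each initial datum there is a solution. -/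
  exists_sol : ∀ x : X, ∃ z ∈ sols, z 0 = x
  /-- (H2) Translates of solutions are solutions. -/
  translate : ∀ z ∈ sols, ∀ τ : ℝ≥0, (fun t => z (t + τ)) ∈ sols
  /-- (H3) Concatenation. -/
  concat : ∀ z₁ ∈ sols, ∀ z₂ ∈ sols, ∀ τ : ℝ≥0, z₁ τ = z₂ 0 →
    (fun t => if t ≤ τ then z₁ t else z₂ (t - τ)) ∈ sols
  /-- (H4) Upper semicontinuity with respect to initial data. -/
  usc : ∀ (z : ℕ → ℝ≥0 → X) (x₀ : X), (∀ j, z j ∈ sols) →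
    Tendsto (fun j => z j 0) atTop (𝓝 x₀) →
    ∃ φ : ℕ → ℕ, StrictMono φ ∧ ∃ z₀ ∈ sols, z₀ 0 = x₀ ∧
      ∀ t : ℝ≥0, Tendsto (fun k => z (φ k) t) atTop (𝓝 (z₀ t))

/-- A generalized semiflow is asymptotically compact if for every sequence of
solutions with bounded initial data and every sequence of times tending to
infinity, the evaluated sequence has a convergent subsequence. -/
def GeneralizedSemiflow.AsymptoticallyCompact {X : Type*} [MetricSpace X]
    (G : GeneralizedSemiflow X) : Prop :=
  ∀ (z : ℕ → ℝ≥0 → X), (∀ j, z j ∈ G.sols) →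
    IsBounded (Set.range fun j => z j 0) →
    ∀ t : ℕ → ℝ≥0, Tendsto (fun j => (t j : ℝ)) atTop atTop →
      ∃ φ : ℕ → ℕ, StrictMono φ ∧ ∃ x : X,
        Tendsto (fun k => z (φ k) (t (φ k))) atTop (𝓝 x)

/-- A generalized semiflow is eventually bounded if every bounded set `B` has
`γ^τ(B) = ⋃_{t ≥ τ} T(t)B` bounded for some `τ ≥ 0`. -/
def GeneralizedSemiflow.EventuallyBounded {X : Type*} [MetricSpace X]
    (G : GeneralizedSemiflow X) : Prop :=
  ∀ B : Set X, IsBounded B → ∃ τ : ℝ≥0,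
    IsBounded {x : X | ∃ z ∈ G.sols, z 0 ∈ B ∧ ∃ t : ℝ≥0, τ ≤ t ∧ z t = x}

/-- Proposition 3.1: an asymptotically compact generalized semiflow is
eventually bounded. -/
theorem stmt19_asymptotically_compact_implies_eventually_bounded
    {X : Type*} [MetricSpace X] (G : GeneralizedSemiflow X)
    (hac : G.AsymptoticallyCompact) : G.EventuallyBounded := by
  intro B hB
  by_contra h
  push_neg at h
  rcases B.eq_empty_or_nonempty with hBe | ⟨x₀, hx₀⟩
  · refine h 0 ?_
    have : {x : X | ∃ z ∈ G.sols, z 0 ∈ B ∧ ∃ t : ℝ≥0, 0 ≤ t ∧ z t = x} = ∅ := by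
      ext x; simp [hBe]
    rw [this]
    exact isBounded_empty
  · have key : ∀ j : ℕ, ∃ z ∈ G.sols, z 0 ∈ B ∧ ∃ t : ℝ≥0,
        (j : ℝ≥0) ≤ t ∧ (j : ℝ) < dist (z t) x₀ := by
      intro j
      have hj := h (j : ℝ≥0)
      by_contra hc
      push_neg at hc
      apply hj
      apply (Metric.isBounded_closedBall (x := x₀) (r := j)).subset
      rintro x ⟨z, hz, hzB, t, hts, rfl⟩
      exact Metric.mem_closedBall.mpr (hc z hz hzB t hts)
    choose z hz hzB t ht hd using key
    have hbd : IsBounded (Set.range fun j => z j 0) :=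
      hB.subset (Set.range_subset_iff.mpr hzB)
    have htt : Tendsto (fun j => ((t j : ℝ))) atTop atTop := by
      apply tendsto_atTop_mono (fun j => ?_) tendsto_natCast_atTop_atTop
      exact_mod_cast ht j
    obtain ⟨φ, hφ, x, hx⟩ := hac z hz hbd t htt
    obtain ⟨N, hN⟩ := Metric.tendsto_atTop.mp hx 1 one_pos
    obtain ⟨M, hM⟩ := exists_nat_gt (1 + dist x x₀)
    set k := max N M with hk
    have h1 : dist (z (φ k) (t (φ k))) x < 1 := hN k (le_max_left _ _)
    have h2 : (φ k : ℝ) < dist (z (φ k) (t (φ k))) x₀ := hd (φ k)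
    have h3 : dist (z (φ k) (t (φ k))) x₀ ≤ dist (z (φ k) (t (φ k))) x + dist x x₀ :=
      dist_triangle _ _ _
    have h4 : (k : ℝ) ≤ (φ k : ℝ) := by exact_mod_cast hφ.le_apply
    have h5 : (M : ℝ) ≤ (k : ℝ) := by exact_mod_cast le_max_right N M
    linarith
end
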